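/- Let M = (α, β; γ, δ) ∈ SL₂(ℤ) satisfy α ≡ −δ (mod p) and γ ≡ −εβ (mod p). Then conjugation by M preserves both lattices: for every x ∈ L_ns one has M⁻¹·x·M ∈ L_ns, and for every x ∈ L_ns^∨ one has M⁻¹·x·M ∈ L_ns^∨. -/

import Mathlib

/-!
Identify `(B, 2C; −2A, −B)` with the binary quadratic form `A X² + B XY + C Y²`. For
`M = (α, β; γ, δ)`, the matrix `adj M · x · M` is then the form substituted by `M`, whose
coefficients are `Q(α, γ)`, `2αβA + (αδ + βγ)B + 2γδC` and `Q(β, δ)`. The defining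
congruences of `L_ns` survive this substitution: all but the last are linear in `A, B, C`, and
`A' − εC'` splits into three terms, each a product of two multiples of `p` once
`α ≡ −δ` and `γ ≡ −εβ (mod p)`. Since `det M = 1`, `M⁻¹ = adj M`, and for `2 × 2` matrices
`Tr(adj M · x · M · adj y) = Tr(x · adj(M · y · adj M))`; so conjugation by `M⁻¹` on `L_ns^∨`
is dual to conjugation by `M` on `L_ns`, which preserves `L_ns` because `adj M` satisfies the
same congruences as `M`.
-/

open Matrix

section FormMatrix

variable {R : Type*} [CommRing R]

def formMatrix (A B C : R) : Matrix (Fin 2) (Fin 2) R :=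
  !![B, 2 * C; -2 * A, -B]

theorem adjugate_mul_formMatrix_mul (α β γ δ A B C : R) :
    (!![α, β; γ, δ]).adjugate * formMatrix A B C * !![α, β; γ, δ] =
      formMatrix (α ^ 2 * A + α * γ * B + γ ^ 2 * C)
        (2 * α * β * A + (α * δ + β * γ) * B + 2 * γ * δ * C)
        (β ^ 2 * A + β * δ * B + δ ^ 2 * C) := by
  rw [adjugate_fin_two_of, formMatrix, formMatrix]
  ext i j
  fin_cases i <;> fin_cases j <;> simp [Matrix.mul_apply] <;> ring

theorem trace_adjugate_conj_mul_adjugate (M x y : Matrix (Fin 2) (Fin 2) R) :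
    trace (M.adjugate * x * M * y.adjugate) = trace (x * (M * y * M.adjugate).adjugate) := by
  rw [adjugate_mul_distrib, adjugate_mul_distrib, adjugate_adjugate' M]
  simp only [Fintype.card_fin, tsub_self, pow_zero, one_smul]
  rw [trace_mul_cycle, Matrix.mul_assoc, Matrix.mul_assoc, trace_mul_cycle']
  simp only [Matrix.mul_assoc]

end FormMatrix

def IsNsCoords (p : ℕ) (ε A B C : ℤ) : Prop :=
  A ≡ 0 [ZMOD (p : ℤ)] ∧ B ≡ 0 [ZMOD (p : ℤ)] ∧ C ≡ 0 [ZMOD (p : ℤ)] ∧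
    B ≡ 0 [ZMOD 2] ∧ A ≡ ε * C [ZMOD ((p : ℤ) ^ 2)]

theorem IsNsCoords.substitute {p : ℕ} {ε A B C α β γ δ : ℤ}
    (hαδ : α ≡ -δ [ZMOD (p : ℤ)]) (hγβ : γ ≡ -(ε * β) [ZMOD (p : ℤ)])
    (h : IsNsCoords p ε A B C) :
    IsNsCoords p ε (α ^ 2 * A + α * γ * B + γ ^ 2 * C)
      (2 * α * β * A + (α * δ + β * γ) * B + 2 * γ * δ * C)
      (β ^ 2 * A + β * δ * B + δ ^ 2 * C) := by
  obtain ⟨hA, hB, hC, hB2, hAC⟩ := h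
  simp only [IsNsCoords, Int.modEq_zero_iff_dvd] at hA hB hC hB2 ⊢
  obtain ⟨b, rfl⟩ := hB2
  refine ⟨?_, ?_, ?_, ⟨α * β * A + (α * δ + β * γ) * b + γ * δ * C, by ring⟩, ?_⟩
  iterate 3 exact dvd_add (dvd_add (hA.mul_left _) (hB.mul_left _)) (hC.mul_left _)
  have hAC' : (p : ℤ) * p ∣ A - ε * C := sq (p : ℤ) ▸ hAC.symm.dvd
  have hαγ : α * γ ≡ ε * β * δ [ZMOD (p : ℤ)] :=
    calc α * γ ≡ -δ * -(ε * β) [ZMOD (p : ℤ)] := hαδ.mul hγβ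
      _ = ε * β * δ := by ring
  have hsq : ε * α ^ 2 + γ ^ 2 ≡ ε * δ ^ 2 + ε ^ 2 * β ^ 2 [ZMOD (p : ℤ)] :=
    calc ε * α ^ 2 + γ ^ 2 ≡ ε * (-δ) ^ 2 + (-(ε * β)) ^ 2 [ZMOD (p : ℤ)] :=
          ((hαδ.pow 2).mul_left ε).add (hγβ.pow 2)
      _ = ε * δ ^ 2 + ε ^ 2 * β ^ 2 := by ring
  refine (Int.modEq_iff_dvd.mpr ?_).symm
  have hsplit : α ^ 2 * A + α * γ * (2 * b) + γ ^ 2 * C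
        - ε * (β ^ 2 * A + β * δ * (2 * b) + δ ^ 2 * C) =
      (α ^ 2 - ε * β ^ 2) * (A - ε * C) + (α * γ - ε * β * δ) * (2 * b)
        + (ε * α ^ 2 + γ ^ 2 - (ε * δ ^ 2 + ε ^ 2 * β ^ 2)) * C := by ring
  rw [hsplit, sq]
  exact dvd_add (dvd_add (dvd_mul_of_dvd_right hAC' _) (mul_dvd_mul hαγ.symm.dvd hB))
    (mul_dvd_mul hsq.symm.dvd hC)

def nsLattice (p : ℕ) (ε : ℤ) : Set (Matrix (Fin 2) (Fin 2) ℚ) :=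
  {x | ∃ A B C : ℤ, x = formMatrix (A : ℚ) B C ∧ IsNsCoords p ε A B C}

theorem adjugate_mul_mul_mem_nsLattice {p : ℕ} {ε α β γ δ : ℤ}
    (hαδ : α ≡ -δ [ZMOD (p : ℤ)]) (hγβ : γ ≡ -(ε * β) [ZMOD (p : ℤ)])
    {x : Matrix (Fin 2) (Fin 2) ℚ} (hx : x ∈ nsLattice p ε) :
    (!![(α : ℚ), β; γ, δ]).adjugate * x * !![(α : ℚ), β; γ, δ] ∈ nsLattice p ε := by
  obtain ⟨A, B, C, rfl, h⟩ := hx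
  refine ⟨_, _, _, ?_, h.substitute hαδ hγβ⟩
  rw [adjugate_mul_formMatrix_mul]
  push_cast
  rfl

theorem stmt_15_general (p : ℕ) (ε : ℤ)
    (bform : Matrix (Fin 2) (Fin 2) ℚ → Matrix (Fin 2) (Fin 2) ℚ → ℚ)
    (hbform : bform = fun x y => -((x * y.adjugate).trace) / (4 * (p : ℚ) ^ 2))
    (Lns : Set (Matrix (Fin 2) (Fin 2) ℚ))
    (hLns : Lns = {x | ∃ A B C : ℤ,
      x = !![(B : ℚ), 2 * (C : ℚ); -2 * (A : ℚ), -(B : ℚ)] ∧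
      A ≡ 0 [ZMOD (p : ℤ)] ∧ B ≡ 0 [ZMOD (p : ℤ)] ∧ C ≡ 0 [ZMOD (p : ℤ)] ∧
      B ≡ 0 [ZMOD 2] ∧ A ≡ ε * C [ZMOD ((p : ℤ) ^ 2)]})
    (LnsDual : Set (Matrix (Fin 2) (Fin 2) ℚ))
    (hLnsDual : LnsDual =
      {x | x.trace = 0 ∧ ∀ y ∈ Lns, ∃ k : ℤ, bform x y = k})
    (α β γ δ : ℤ) (hdet : α * δ - β * γ = 1)
    (hαδ : α ≡ -δ [ZMOD (p : ℤ)]) (hγβ : γ ≡ -(ε * β) [ZMOD (p : ℤ)])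
    (M : Matrix (Fin 2) (Fin 2) ℚ)
    (hM : M = !![(α : ℚ), (β : ℚ); (γ : ℚ), (δ : ℚ)]) :
    (∀ x ∈ Lns, M⁻¹ * x * M ∈ Lns) ∧ (∀ x ∈ LnsDual, M⁻¹ * x * M ∈ LnsDual) := by
  have hL : Lns = nsLattice p ε := hLns
  subst hL hLnsDual hbform
  have hdetM : M.det = 1 := by
    rw [hM, det_fin_two_of]
    exact_mod_cast hdet
  have hinv : M⁻¹ = M.adjugate := by rw [inv_def, hdetM, Ring.inverse_one, one_smul]
  have hconj : ∀ y ∈ nsLattice p ε, M⁻¹ * y * M ∈ nsLattice p ε := by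
    rw [hinv, hM]
    exact fun y => adjugate_mul_mul_mem_nsLattice hαδ hγβ
  have hconj' : ∀ y ∈ nsLattice p ε, M * y * M⁻¹ ∈ nsLattice p ε := by
    intro y hy
    have hδα : δ ≡ -α [ZMOD (p : ℤ)] := by simpa using hαδ.neg.symm
    have hγβ' : -γ ≡ -(ε * -β) [ZMOD (p : ℤ)] := by simpa using hγβ.neg
    rw [hinv, hM, adjugate_fin_two_of]
    simpa [adjugate_fin_two_of] using adjugate_mul_mul_mem_nsLattice hδα hγβ' hy
  refine ⟨hconj, fun x ⟨hx, hxy⟩ => ⟨?_, fun y hy => ?_⟩⟩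
  · rw [trace_conj' ((isUnit_iff_isUnit_det M).mpr (hdetM ▸ isUnit_one)), hx]
  · obtain ⟨k, hk⟩ := hxy _ (hconj' y hy)
    refine ⟨k, ?_⟩
    rw [← hk, hinv]
    simp only [trace_adjugate_conj_mul_adjugate]

/-- Proposition 8.1 (2), second part. If `M = (α, β; γ, δ) ∈ SL₂(ℤ)`
satisfies `α ≡ −δ` and `γ ≡ −εβ (mod p)` (i.e. `M ∈ Γ⁺_ns \ Γ_ns`), then
conjugation by `M` preserves both `L_ns` and `L_ns^∨`. -/
theorem stmt_15 (p : ℕ) (hp : p.Prime) (hp2 : p ≠ 2)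
    (ε : ℤ) (hε1 : ε ≡ 1 [ZMOD 4]) (hεns : ¬ IsSquare (ε : ZMod p))
    (bform : Matrix (Fin 2) (Fin 2) ℚ → Matrix (Fin 2) (Fin 2) ℚ → ℚ)
    (hbform : bform = fun x y => -((x * y.adjugate).trace) / (4 * (p : ℚ) ^ 2))
    (Lns : Set (Matrix (Fin 2) (Fin 2) ℚ))
    (hLns : Lns = {x | ∃ A B C : ℤ,
      x = !![(B : ℚ), 2 * (C : ℚ); -2 * (A : ℚ), -(B : ℚ)] ∧
      A ≡ 0 [ZMOD (p : ℤ)] ∧ B ≡ 0 [ZMOD (p : ℤ)] ∧ C ≡ 0 [ZMOD (p : ℤ)] ∧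
      B ≡ 0 [ZMOD 2] ∧ A ≡ ε * C [ZMOD ((p : ℤ) ^ 2)]})
    (LnsDual : Set (Matrix (Fin 2) (Fin 2) ℚ))
    (hLnsDual : LnsDual =
      {x | x.trace = 0 ∧ ∀ y ∈ Lns, ∃ k : ℤ, bform x y = k})
    (α β γ δ : ℤ) (hdet : α * δ - β * γ = 1)
    (hαδ : α ≡ -δ [ZMOD (p : ℤ)]) (hγβ : γ ≡ -(ε * β) [ZMOD (p : ℤ)])
    (M : Matrix (Fin 2) (Fin 2) ℚ)
    (hM : M = !![(α : ℚ), (β : ℚ); (γ : ℚ), (δ : ℚ)]) :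
    (∀ x ∈ Lns, M⁻¹ * x * M ∈ Lns) ∧ (∀ x ∈ LnsDual, M⁻¹ * x * M ∈ LnsDual) :=
  stmt_15_general p ε bform hbform Lns hLns LnsDual hLnsDual α β γ δ hdet hαδ hγβ M hM
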